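/- Let f: X → Y be a holomorphic submersion between two complex manifolds. If L is an RC-positive holomorphic line bundle over Y with RC-positive metric h, then the pullback bundle f^*(L) with metric f^*h is also RC-positive. -/

import Mathlib

/-!
Vocabulary for the statements of X. Yang, "RC-positivity, vanishing theorems and
rigidity of holomorphic maps".

Mathlib does not yet contain complex manifolds with their holomorphic vector
bundles, Chern curvature, nef / pseudo-effective line bundles, etc.  We therefore
record these notions as structures packaging the underlying data (fibers,
Hermitian metrics, curvature tensors, holomorphicity predicates), and define the
positivity notions used in the paper in terms of this data, following the
definitions given in the paper.
-/

noncomputable section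

open scoped BigOperators

/-- A complex manifold, packaged with the data used in the paper: the underlying
topological space, the complex dimension, the holomorphic tangent spaces, and
primitive notions of holomorphic functions, holomorphic vector fields, analytic
subsets, and semi-positivity of `(1,1)`-currents. -/
structure CpxMfd : Type 1 where
  carrier : Type
  [top : TopologicalSpace carrier]
  dim : ℕ
  /-- the holomorphic tangent space at a point -/
  Tgt : carrier → Type
  [tgtGrp : ∀ x, AddCommGroup (Tgt x)]
  [tgtMod : ∀ x, Module ℂ (Tgt x)]
  tgt_dim : ∀ x, Module.finrank ℂ (Tgt x) = dim
  /-- the holomorphic functions `carrier → ℂ` -/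
  IsHolFun : (carrier → ℂ) → Prop
  /-- the holomorphic vector fields, i.e. holomorphic sections of the tangent bundle -/
  IsHolVF : (∀ x, Tgt x) → Prop
  /-- `SemiPosCurrent θ φ` records that the `(1,1)`-current `θ + √-1 ∂∂̄ φ` is
  semi-positive in the sense of currents, where the smooth real `(1,1)`-form `θ`
  is recorded through its values `θ(u, ū)` on tangent vectors. -/
  SemiPosCurrent : (∀ x, Tgt x → ℝ) → (carrier → EReal) → Prop
  /-- the analytic subsets of the manifold -/
  AnalyticSet : Set carrier → Prop

attribute [instance] CpxMfd.top CpxMfd.tgtGrp CpxMfd.tgtMod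

/-- A holomorphic vector bundle over a complex manifold, packaged via its fibers
and its (primitive) predicate of global holomorphic sections. -/
structure HolBundle (X : CpxMfd) : Type 1 where
  rank : ℕ
  Fib : X.carrier → Type
  [fibGrp : ∀ x, AddCommGroup (Fib x)]
  [fibMod : ∀ x, Module ℂ (Fib x)]
  fib_dim : ∀ x, Module.finrank ℂ (Fib x) = rank
  /-- the global holomorphic sections -/
  IsHolSec : (∀ x, Fib x) → Prop

attribute [instance] HolBundle.fibGrp HolBundle.fibMod

/-- The holomorphic tangent bundle `T_X` of a complex manifold. -/
def CpxMfd.T (X : CpxMfd) : HolBundle X where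
  rank := X.dim
  Fib := X.Tgt
  fibGrp := X.tgtGrp
  fibMod := X.tgtMod
  fib_dim := X.tgt_dim
  IsHolSec := X.IsHolVF

/-- `H⁰(X, E) = 0`:  the bundle `E` has no nontrivial global holomorphic section. -/
def HolBundle.H0Trivial {X : CpxMfd} (E : HolBundle X) : Prop :=
  ∀ s : (∀ x, E.Fib x), E.IsHolSec s → ∀ x, s x = 0

/-- A smooth Hermitian metric on a holomorphic vector bundle, packaged together with
its Chern curvature tensor, recorded through the values `R(u, ū, v, v̄)`
(`u` a tangent vector, `v` a vector in the fiber). -/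
structure HermMetric {X : CpxMfd} (E : HolBundle X) where
  inner : ∀ x, E.Fib x → E.Fib x → ℂ
  conj_symm : ∀ x v w, inner x v w = starRingEnd ℂ (inner x w v)
  add_left : ∀ x u v w, inner x (u + v) w = inner x u w + inner x v w
  smul_left : ∀ x (c : ℂ) v w, inner x (c • v) w = c * inner x v w
  pos_def : ∀ x v, v ≠ 0 → 0 < (inner x v v).re
  /-- the Chern curvature `R(u, ū, v, v̄)` of the Chern connection of the metric -/
  curv : ∀ x, X.Tgt x → E.Fib x → ℝ

/-- RC-positivity of a Hermitian metric on a vector bundle (Definition 2.2 of the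
paper): for every nonzero `v` in a fiber there is a tangent vector `u` with
`R(u, ū, v, v̄) > 0`. -/
def HermMetric.RCPositive {X : CpxMfd} {E : HolBundle X} (h : HermMetric E) : Prop :=
  ∀ (x : X.carrier) (v : E.Fib x), v ≠ 0 → ∃ u : X.Tgt x, u ≠ 0 ∧ 0 < h.curv x u v

/-- A holomorphic vector bundle is RC-positive if it admits an RC-positive smooth
Hermitian metric. -/
def HolBundle.RCPositive {X : CpxMfd} (E : HolBundle X) : Prop :=
  ∃ h : HermMetric E, h.RCPositive

/-- A smooth Hermitian metric on a holomorphic line bundle, packaged together with its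
Chern curvature form `(−√−1 ∂∂̄ log h)(u, ū)`. -/
structure HermLineMetric {X : CpxMfd} (L : HolBundle X) where
  normSq : ∀ x, L.Fib x → ℝ
  normSq_pos : ∀ x v, v ≠ 0 → 0 < normSq x v
  normSq_smul : ∀ x (c : ℂ) v, normSq x (c • v) = Complex.normSq c * normSq x v
  /-- the Chern curvature form `(−√−1 ∂∂̄ log h)(u, ū)` -/
  curvForm : ∀ x, X.Tgt x → ℝ
  curvForm_smul : ∀ x (c : ℂ) u, curvForm x (c • u) = Complex.normSq c * curvForm x u

/-- A Hermitian metric on a line bundle is RC-positive if its curvature form has at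
least one positive eigenvalue at every point. -/
def HermLineMetric.RCPositive {X : CpxMfd} {L : HolBundle X} (h : HermLineMetric L) : Prop :=
  ∀ x : X.carrier, ∃ u : X.Tgt x, u ≠ 0 ∧ 0 < h.curvForm x u

/-- A holomorphic line bundle is RC-positive if it admits a smooth Hermitian metric
whose curvature form has at least one positive eigenvalue at every point. -/
def HolBundle.RCPositiveLine {X : CpxMfd} (L : HolBundle X) : Prop :=
  ∃ h : HermLineMetric L, h.RCPositive

/-- A Hermitian metric on the complex manifold `X` itself, i.e. on its holomorphic
tangent bundle. -/
abbrev CpxMfd.Metric (X : CpxMfd) := HermMetric X.T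

/-- A line bundle `L` over `X` is nef if for every `ε > 0` and every Hermitian metric
`ω` on `X` there is a smooth Hermitian metric `h` on `L` with
`−√−1 ∂∂̄ log h ≥ −ε ω`. -/
def HolBundle.Nef {X : CpxMfd} (L : HolBundle X) : Prop :=
  ∀ ε : ℝ, 0 < ε → ∀ ω : X.Metric,
    ∃ h : HermLineMetric L, ∀ (x : X.carrier) (u : X.Tgt x),
      -ε * (ω.inner x u u).re ≤ h.curvForm x u

/-- A line bundle `L` over `X` is `k`-positive if it admits a smooth Hermitian metric
whose Chern curvature form has at least `dim X − k` positive eigenvalues at every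
point (Definition 2.7), i.e. is positive definite on a subspace of the tangent space
of dimension at least `dim X − k`. -/
def HolBundle.KPositive {X : CpxMfd} (L : HolBundle X) (k : ℕ) : Prop :=
  ∃ h : HermLineMetric L, ∀ x : X.carrier, ∃ S : Submodule ℂ (X.Tgt x),
    X.dim - k ≤ Module.finrank ℂ S ∧ ∀ u ∈ S, u ≠ 0 → 0 < h.curvForm x u

/-- A line bundle is pseudo-effective if it possesses a possibly singular Hermitian
metric — a smooth metric `h` twisted by an upper semicontinuous weight
`φ : X → [-∞, ∞)`, `φ ≢ −∞` — whose curvature current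
`−√−1 ∂∂̄ log h + √−1 ∂∂̄ φ` is semi-positive in the sense of currents. -/
def HolBundle.PseudoEffective {X : CpxMfd} (L : HolBundle X) : Prop :=
  ∃ (h : HermLineMetric L) (φ : X.carrier → EReal),
    UpperSemicontinuous φ ∧ (∃ x, φ x ≠ ⊥) ∧ X.SemiPosCurrent h.curvForm φ

/-- A witness that `E'` is the dual bundle `E^*` of `E`: a fiberwise perfect pairing
which is holomorphic, i.e. pairs holomorphic sections to holomorphic functions. -/
structure DualPair {X : CpxMfd} (E E' : HolBundle X) where
  pair : ∀ x, E'.Fib x →ₗ[ℂ] E.Fib x →ₗ[ℂ] ℂ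
  perfect : ∀ x, Function.Bijective ⇑(pair x)
  hol_pair : ∀ (s : ∀ x, E.Fib x) (t : ∀ x, E'.Fib x),
    E.IsHolSec s → E'.IsHolSec t → X.IsHolFun fun x => pair x (t x) (s x)

/-- A witness that `G` is the tensor product bundle `E ⊗ F`: a fiberwise bilinear map
whose image spans, with the correct rank, pairing holomorphic sections to holomorphic
sections. -/
structure TensorPair {X : CpxMfd} (G E F : HolBundle X) where
  mul : ∀ x, E.Fib x →ₗ[ℂ] F.Fib x →ₗ[ℂ] G.Fib x
  rank_eq : G.rank = E.rank * F.rank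
  span : ∀ x, Submodule.span ℂ
    (Set.range fun vw : E.Fib x × F.Fib x => mul x vw.1 vw.2) = ⊤
  hol_mul : ∀ (s : ∀ x, E.Fib x) (t : ∀ x, F.Fib x),
    E.IsHolSec s → F.IsHolSec t → G.IsHolSec fun x => mul x (s x) (t x)

/-- A witness that `G` is the bundle `E^* ⊗ F^*` of fiberwise bilinear forms on
`E × F`: a fiberwise identification of `G` with the bilinear forms, pairing
holomorphic sections to holomorphic functions. -/
structure DualTensorPair {X : CpxMfd} (G E F : HolBundle X) where
  pair : ∀ x, G.Fib x →ₗ[ℂ] E.Fib x →ₗ[ℂ] F.Fib x →ₗ[ℂ] ℂ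
  perfect : ∀ x, Function.Bijective ⇑(pair x)
  hol_pair : ∀ (g : ∀ x, G.Fib x) (s : ∀ x, E.Fib x) (t : ∀ x, F.Fib x),
    G.IsHolSec g → E.IsHolSec s → F.IsHolSec t →
      X.IsHolFun fun x => pair x (g x) (s x) (t x)

/-- A holomorphic map between complex manifolds, packaged with its differential. -/
structure HolMap (M N : CpxMfd) where
  toFun : M.carrier → N.carrier
  cont : Continuous toFun
  /-- the holomorphic differential of the map -/
  deriv : ∀ x, M.Tgt x →ₗ[ℂ] N.Tgt (toFun x)

/-- A map is constant. -/
def HolMap.IsConst {M N : CpxMfd} (f : HolMap M N) : Prop :=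
  ∃ c : N.carrier, ∀ x, f.toFun x = c

/-- A witness that the bundle `E₁` over `M` is the pullback `f^* E` of the bundle `E`
over `N` along `f : M → N`. -/
structure PullbackPair {M N : CpxMfd} (f : M.carrier → N.carrier)
    (E : HolBundle N) (E₁ : HolBundle M) where
  iso : ∀ x, E₁.Fib x ≃ₗ[ℂ] E.Fib (f x)
  hol_sec : ∀ s : (∀ y, E.Fib y), E.IsHolSec s → E₁.IsHolSec fun x => (iso x).symm (s (f x))

/-- A realization of the projectivized bundle `P(E)` of lines in the fibers of `E` as a
complex manifold, together with (the data of) its tautological line bundles.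
Following the conventions of the paper, where points of `P(W^*)` are the hyperplanes
of `W`, i.e. the lines of `W^*`:  for `PB : ProjBundle E`, the bundle `PB.tautNeg`
(whose fiber at `p` is the tautological line `PB.line p ⊆ E`) realizes
`O_{E^*}(-1)`, and its dual `PB.tautPos` realizes `O_{E^*}(1)`.  Equivalently, if
`E = W^*`, then `PB.P = P(W^*)`, `PB.tautNeg = O_W(-1)` and `PB.tautPos = O_W(1)`. -/
structure ProjBundle {X : CpxMfd} (E : HolBundle X) where
  P : CpxMfd
  π : P.carrier → X.carrier
  π_cont : Continuous π
  /-- the line in `E` represented by a point of `P(E)` -/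
  line : ∀ p : P.carrier, Submodule ℂ (E.Fib (π p))
  line_dim : ∀ p, Module.finrank ℂ (line p) = 1
  inj : Function.Injective fun p : P.carrier =>
    (⟨π p, line p⟩ : Σ x : X.carrier, Submodule ℂ (E.Fib x))
  surj : ∀ (x : X.carrier) (ℓ : Submodule ℂ (E.Fib x)), Module.finrank ℂ ℓ = 1 →
    ∃ p : P.carrier, (⟨π p, line p⟩ : Σ x : X.carrier, Submodule ℂ (E.Fib x)) = ⟨x, ℓ⟩
  /-- the global holomorphic sections of the tautological sub-line bundle -/
  holSecNeg : (∀ p, line p) → Prop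
  /-- the global holomorphic sections of its dual -/
  holSecPos : (∀ p, Module.Dual ℂ (line p)) → Prop

/-- The tautological line bundle `O_{E^*}(-1)` over `P(E)`, whose fiber at `p` is the
line in `E` represented by `p`. -/
def ProjBundle.tautNeg {X : CpxMfd} {E : HolBundle X} (PB : ProjBundle E) :
    HolBundle PB.P where
  rank := 1
  Fib := fun p => PB.line p
  fib_dim := PB.line_dim
  IsHolSec := PB.holSecNeg

/-- The tautological quotient line bundle `O_{E^*}(1)` over `P(E)`, the dual of
`O_{E^*}(-1)`. -/
def ProjBundle.tautPos {X : CpxMfd} {E : HolBundle X} (PB : ProjBundle E) :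
    HolBundle PB.P where
  rank := 1
  Fib := fun p => Module.Dual ℂ (PB.line p)
  fib_dim := fun p => by
    haveI : FiniteDimensional ℂ (PB.line p) :=
      FiniteDimensional.of_finrank_eq_succ (PB.line_dim p)
    rw [Subspace.dual_finrank_eq]
    exact PB.line_dim p
  IsHolSec := PB.holSecPos

/-- The pullback `(f^*L, f^*h)` of a Hermitian line bundle `(L, h)` along a holomorphic
map `f`: the norm is pulled back through the fiber identification, and the curvature
form is pulled back through the differential of `f`. -/
def HolMap.pullbackLineMetric {M N : CpxMfd} (f : HolMap M N) {L : HolBundle N}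
    {L₁ : HolBundle M} (pb : PullbackPair f.toFun L L₁) (h : HermLineMetric L) :
    HermLineMetric L₁ where
  normSq := fun x v => h.normSq (f.toFun x) (pb.iso x v)
  normSq_pos := fun x v hv =>
    h.normSq_pos _ _ ((pb.iso x).map_ne_zero_iff.mpr hv)
  normSq_smul := fun x c v => by
    show h.normSq (f.toFun x) (pb.iso x (c • v)) = _
    rw [map_smul]; exact h.normSq_smul _ c _
  curvForm := fun x u => h.curvForm (f.toFun x) (f.deriv x u)
  curvForm_smul := fun x c u => by
    show h.curvForm (f.toFun x) (f.deriv x (c • u)) = _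
    rw [map_smul]; exact h.curvForm_smul _ c _

theorem exists_ne_zero_pos_comp_of_surjective {R V W : Type*} [Semiring R]
    [AddCommMonoid V] [Module R V] [AddCommMonoid W] [Module R W]
    (T : V →ₗ[R] W) (hT : Function.Surjective T) {φ : W → ℝ}
    (hφ : ∃ w, w ≠ 0 ∧ 0 < φ w) : ∃ v, v ≠ 0 ∧ 0 < φ (T v) := by
  obtain ⟨w, hw, hpos⟩ := hφ
  obtain ⟨v, rfl⟩ := hT w
  exact ⟨v, fun hv => hw (by rw [hv, map_zero]), hpos⟩

theorem pullback_rc_positive_of_submersion_general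
    (X Y : CpxMfd) (f : HolMap X Y)
    (hsub : ∀ x, Function.Surjective (f.deriv x))
    (L : HolBundle Y)
    (h : HermLineMetric L) (hL : h.RCPositive)
    (L₁ : HolBundle X) (pb : PullbackPair f.toFun L L₁) :
    (f.pullbackLineMetric pb h).RCPositive := fun x =>
  exists_ne_zero_pos_comp_of_surjective (f.deriv x) (hsub x) (hL (f.toFun x))

/-- **Lemma 3.5.**  Let `f : X → Y` be a holomorphic submersion between two complex
manifolds.  If `L` is an RC-positive line bundle over `Y` with RC-positive metric
`h`, then `f^*(L)` with the metric `f^*h` is also RC-positive. -/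
theorem pullback_rc_positive_of_submersion
    (X Y : CpxMfd) (f : HolMap X Y)
    (hsub : ∀ x, Function.Surjective (f.deriv x))
    (L : HolBundle Y) (hrank : L.rank = 1)
    (h : HermLineMetric L) (hL : h.RCPositive)
    (L₁ : HolBundle X) (pb : PullbackPair f.toFun L L₁) :
    (f.pullbackLineMetric pb h).RCPositive :=
  pullback_rc_positive_of_submersion_general X Y f hsub L h hL L₁ pb
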